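/- Let Q be a group acting on an abelian group M, and suppose n·M = 0 for a positive integer n (M is n-torsion). If f : M → N is a Q-equivariant homomorphism of n-torsion Q-modules inducing an isomorphism Ext^j_ℤ(N, ℤ/n) → Ext^j_ℤ(M, ℤ/n) for j = 0, 1, then f is an isomorphism. -/

import Mathlib

open CategoryTheory CategoryTheory.Limits

noncomputable def iota (n : ℕ) [NeZero n] : ZMod n →+ AddCircle (1 : ℚ) :=
  ZMod.lift n ⟨(AddMonoidHom.mk' (fun m => (((m : ℚ) / n : ℚ) : AddCircle (1:ℚ))) (by
      intro a b
      push_cast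
      rw [add_div, QuotientAddGroup.mk_add])), by
    simp only [AddMonoidHom.mk'_apply]
    have : (((n : ℤ) : ℚ) / n : ℚ) = 1 := by
      push_cast
      exact div_self (by exact_mod_cast (NeZero.ne n))
    rw [this]
    exact AddCircle.coe_period 1⟩

lemma iota_intCast (n : ℕ) [NeZero n] (m : ℤ) :
    iota n (m : ZMod n) = (((m : ℚ) / n : ℚ) : AddCircle (1:ℚ)) := by
  rw [iota, ZMod.lift_coe]
  rfl

lemma iota_injective (n : ℕ) [NeZero n] : Function.Injective (iota n) := by
  rw [injective_iff_map_eq_zero]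
  intro z hz
  obtain ⟨m, rfl⟩ := ZMod.intCast_surjective z
  rw [iota_intCast, AddCircle.coe_eq_zero_iff] at hz
  obtain ⟨k, hk⟩ := hz
  rw [ZMod.intCast_zmod_eq_zero_iff_dvd]
  refine ⟨k, ?_⟩
  rw [zsmul_eq_mul, mul_one] at hk
  have hn : ((n : ℚ)) ≠ 0 := by exact_mod_cast (NeZero.ne n)
  have : ((m : ℚ)) = (n : ℚ) * k := by
    rw [eq_div_iff hn] at hk
    linarith [hk]
  exact_mod_cast this

lemma mem_range_iota (n : ℕ) [NeZero n] (y : AddCircle (1 : ℚ)) (hy : n • y = 0) :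
    y ∈ (iota n).range := by
  obtain ⟨q, rfl⟩ := QuotientAddGroup.mk_surjective y
  rw [← AddCircle.coe_nsmul, AddCircle.coe_eq_zero_iff] at hy
  obtain ⟨k, hk⟩ := hy
  rw [zsmul_eq_mul, mul_one] at hk
  refine ⟨(k : ZMod n), ?_⟩
  rw [iota_intCast]
  congr 1
  have hn : ((n : ℚ)) ≠ 0 := by exact_mod_cast (NeZero.ne n)
  field_simp
  rw [hk, nsmul_eq_mul, mul_comm]

lemma sep {A : Type} [AddCommGroup A] (n : ℕ) (hn : 0 < n) (h : ∀ x : A, n • x = 0)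
    {a : A} (ha : a ≠ 0) : ∃ φ : A →+ ZMod n, φ a ≠ 0 := by
  haveI : NeZero n := ⟨hn.ne'⟩
  obtain ⟨c, hc⟩ := CharacterModule.exists_character_apply_ne_zero_of_ne_zero ha
  have hmem : ∀ x : A, (show A →+ AddCircle (1:ℚ) from c) x ∈ (iota n).range := by
    intro x
    apply mem_range_iota
    rw [← map_nsmul, h, map_zero]
  let e := AddMonoidHom.ofInjective (iota_injective n)
  refine ⟨e.symm.toAddMonoidHom.comp
    (AddMonoidHom.codRestrict (show A →+ AddCircle (1:ℚ) from c) (iota n).range hmem), ?_⟩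
  intro h0
  apply hc
  have := congrArg e h0
  simp only [AddMonoidHom.comp_apply, AddEquiv.toAddMonoidHom_eq_coe,
    AddEquiv.coe_toAddMonoidHom, AddEquiv.apply_symm_apply, map_zero] at this
  exact congrArg Subtype.val ((AddEquiv.map_eq_zero_iff e.symm).mp h0)

noncomputable section

section Cat

variable (n : ℕ)

abbrev ZZ (n : ℕ) : ModuleCat ℤ := ModuleCat.of ℤ (ZMod n)

set_option synthInstance.maxHeartbeats 1000000 in
lemma ext0_iso_transfer {X Y : ModuleCat ℤ} (g : X ⟶ Y) (Z : ModuleCat ℤ)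
    (h : IsIso (((Ext ℤ (ModuleCat ℤ) 0).map g.op).app Z)) :
    IsIso ((((linearYoneda ℤ (ModuleCat ℤ)).obj Z)).map g.op) := by
  set G := (linearYoneda ℤ (ModuleCat ℤ)).obj Z with hG
  haveI : PreservesLimits G := by
    haveI : PreservesLimits (G ⋙ forget₂ (ModuleCat ℤ) AddCommGrpCat) :=
      (inferInstance : PreservesLimits (preadditiveYoneda.obj Z))
    exact preservesLimits_of_reflects_of_preserves _ (forget₂ (ModuleCat ℤ) AddCommGrpCat)
  haveI : PreservesFiniteColimits G.rightOp := by
    constructor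
    intro J _ _
    exact preservesColimitsOfShape_rightOp _ _
  set τ : G.rightOp.leftOp ⟶ (G.rightOp.leftDerived 0).leftOp :=
    NatTrans.leftOp G.rightOp.fromLeftDerivedZero with hτ
  haveI : ∀ (W : (ModuleCat ℤ)ᵒᵖ), IsIso (τ.app W) := fun W => by
    have : IsIso (G.rightOp.fromLeftDerivedZero.app W.unop) := inferInstance
    exact (inferInstance : IsIso ((G.rightOp.fromLeftDerivedZero.app W.unop).unop))
  have hnat := τ.naturality g.op
  have hkey : (((Ext ℤ (ModuleCat ℤ) 0).map g.op).app Z) =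
      ((G.rightOp.leftDerived 0).leftOp).map g.op := rfl
  rw [hkey] at h
  have : G.rightOp.leftOp.map g.op =
      τ.app (Opposite.op Y) ≫ ((G.rightOp.leftDerived 0).leftOp).map g.op ≫
        inv (τ.app (Opposite.op X)) := by
    rw [← Category.assoc, ← hnat, Category.assoc, IsIso.hom_inv_id, Category.comp_id]
  have : IsIso (G.rightOp.leftOp.map g.op) := by
    haveI hh := h
    rw [this]; exact IsIso.comp_isIso' inferInstance (IsIso.comp_isIso' hh inferInstance)
  exact this

end Cat

section Main

/-- Let `Q` act on `n`-torsion abelian groups `M` and `N`, and let `f : M → N` be a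
`Q`-equivariant homomorphism inducing isomorphisms `Ext^j_ℤ(N, ℤ/n) → Ext^j_ℤ(M, ℤ/n)` for
`j = 0, 1`.  Then `f` is an isomorphism. -/
theorem stmt_13 (Q : Type) [Group Q] (n : ℕ) (hn : 0 < n)
    (M N : Type) [AddCommGroup M] [AddCommGroup N]
    [DistribMulAction Q M] [DistribMulAction Q N]
    (hM : ∀ m : M, n • m = 0) (hN : ∀ x : N, n • x = 0)
    (f : M →+ N) (hequiv : ∀ (q : Q) (m : M), f (q • m) = q • f m)
    (hext : ∀ j : ℕ, j ≤ 1 →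
      IsIso (((Ext ℤ (ModuleCat ℤ) j).map
          (ModuleCat.ofHom f.toIntLinearMap).op).app (ModuleCat.of ℤ (ZMod n)))) :
    Function.Bijective f := by
  classical
  haveI : NeZero n := ⟨hn.ne'⟩
  set X := ModuleCat.of ℤ M with hX
  set Y := ModuleCat.of ℤ N with hY
  set Z := ModuleCat.of ℤ (ZMod n) with hZ
  set g : X ⟶ Y := ModuleCat.ofHom f.toIntLinearMap with hg
  have h0 : IsIso ((((linearYoneda ℤ (ModuleCat ℤ)).obj Z)).map g.op) :=
    ext0_iso_transfer g Z (hext 0 (by norm_num))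
  have hbij : Function.Bijective (((linearYoneda ℤ (ModuleCat ℤ)).obj Z).map g.op) := by
    have := ConcreteCategory.bijective_of_isIso (C := ModuleCat ℤ)
      (((linearYoneda ℤ (ModuleCat ℤ)).obj Z).map g.op)
    exact this
  have happ : ∀ (φ : Y ⟶ Z), ((linearYoneda ℤ (ModuleCat ℤ)).obj Z).map g.op φ = g ≫ φ :=
    fun φ => rfl
  have hsurj : ∀ ψ' : X ⟶ Z, ∃ φ' : Y ⟶ Z, g ≫ φ' = ψ' := fun ψ' => by
    obtain ⟨φ, hφ⟩ := hbij.2 ψ'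
    exact ⟨φ, (happ φ).symm.trans hφ⟩
  have hinj : ∀ φ₁ φ₂ : Y ⟶ Z, g ≫ φ₁ = g ≫ φ₂ → φ₁ = φ₂ := fun φ₁ φ₂ h =>
    hbij.1 ((happ φ₁).trans (h.trans (happ φ₂).symm))
  constructor
  · -- injectivity
    have hker : ∀ m : M, f m = 0 → m = 0 := by
      intro m hm
      by_contra hm0
      obtain ⟨ψ, hψ⟩ := sep n hn hM hm0
      obtain ⟨φ, hφ⟩ := hsurj (ModuleCat.ofHom ψ.toIntLinearMap)
      have h2 : φ.hom (f m) = ψ m := congrArg (fun (u : X ⟶ Z) => u.hom m) hφ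
      rw [hm, map_zero] at h2
      exact hψ h2.symm
    intro m₁ m₂ h12
    have : f (m₁ - m₂) = 0 := by rw [map_sub, h12, sub_self]
    exact sub_eq_zero.mp (hker _ this)
  · -- surjectivity
    intro x
    by_contra hx
    push_neg at hx
    have hxK : (QuotientAddGroup.mk x : N ⧸ f.range) ≠ 0 := by
      intro h
      obtain ⟨m, hm⟩ := (QuotientAddGroup.eq_zero_iff x).mp h
      exact hx m hm
    have hQ : ∀ y : N ⧸ f.range, n • y = 0 := by
      intro y
      induction y using QuotientAddGroup.induction_on with
      | H z => rw [← QuotientAddGroup.mk_nsmul, hN, QuotientAddGroup.mk_zero]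
    obtain ⟨ψ, hψ⟩ := sep n hn hQ hxK
    set φ : N →+ ZMod n := ψ.comp (QuotientAddGroup.mk' f.range) with hφdef
    have hcomp : g ≫ ModuleCat.ofHom φ.toIntLinearMap = g ≫ (0 : Y ⟶ Z) := by
      apply ModuleCat.hom_ext
      apply LinearMap.ext
      intro m
      show φ (f m) = 0
      rw [hφdef]
      simp only [AddMonoidHom.comp_apply, QuotientAddGroup.mk'_apply]
      rw [(QuotientAddGroup.eq_zero_iff (f m)).mpr (AddMonoidHom.mem_range.mpr ⟨m, rfl⟩), map_zero]
    have heq : ModuleCat.ofHom φ.toIntLinearMap = (0 : Y ⟶ Z) :=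
      hinj _ _ hcomp
    apply hψ
    have := congrArg (fun (u : Y ⟶ Z) => u.hom x) heq
    exact this

end Main
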